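/- arXiv:2208.01434 — 4 statements merged into one kernel-verified Lean document; each statement's English description precedes it below -/
import Mathlib

section
/- Let ε ∈ (0, 1), μ₀ > 0 and τ > 0, set μ(t) = μ₀·e^{−t/τ}, and let C_E, C_RE : [0, ∞) → ℝ be differentiable with C_E′(t) = −((1−ε)/ε)·μ(t)·(C_E(t) − C_RE(t)), C_RE′(t) = μ(t)·(C_E(t) − C_RE(t)), and C_E(0) > C_RE(0). Then C_E(t) − C_RE(t) = (C_E(0) − C_RE(0))·exp(−(μ₀τ/ε)·(1 − e^{−t/τ})) for all t ≥ 0, and as t → ∞ the difference tends to the strictly positive limit (C_E(0) − C_RE(0))·exp(−μ₀τ/ε). In particular, after a single electroporation pulse with membrane resealing, the extracellular and intracellular concentrations never fully equilibrate. -/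
/-!
The difference `D = C_E − C_RE` obeys the scalar linear equation `D′ = −(μ/ε)·D`, whose
integrating factor is `exp A` with `A(t) = (μ₀τ/ε)(1 − e^{−t/τ})`, a primitive of `μ/ε`.
Hence `D·exp A` is constant, which gives the closed form. Since `A` increases to the finite
value `μ₀τ/ε`, the difference tends to `D(0)·exp(−μ₀τ/ε)`, which is positive when `D(0)` is.
-/

open Real Set Filter Topology

theorem eq_mul_exp_neg_sub_of_hasDerivAt {D a A : ℝ → ℝ} {t₀ : ℝ}
    (hD : ∀ t ∈ Ici t₀, HasDerivAt D (-a t * D t) t)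
    (hA : ∀ t ∈ Ici t₀, HasDerivAt A (a t) t) :
    ∀ t ∈ Ici t₀, D t = D t₀ * exp (-(A t - A t₀)) := by
  have hderiv : ∀ t ∈ Ici t₀, HasDerivAt (fun s => D s * exp (A s)) 0 t := fun t ht =>
    ((hD t ht).mul (hA t ht).exp).congr_deriv (by ring)
  intro t ht
  have hconst := constant_of_has_deriv_right_zero
    (fun s hs => (hderiv s hs.1).continuousAt.continuousWithinAt)
    (fun s hs => (hderiv s hs.1).hasDerivWithinAt) t ⟨ht, le_rfl⟩
  rw [exp_neg, exp_sub, inv_div, ← mul_div_assoc, ← hconst,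
    mul_div_cancel_right₀ _ (exp_ne_zero _)]

theorem hasDerivAt_one_sub_exp_neg_div (τ t : ℝ) :
    HasDerivAt (fun s => 1 - exp (-s / τ)) (exp (-t / τ) / τ) t := by
  have hlin : HasDerivAt (fun s : ℝ => -s / τ) (-1 / τ) t := (hasDerivAt_neg t).div_const τ
  exact ((hasDerivAt_const t 1).sub hlin.exp).congr_deriv (by ring)

theorem tendsto_exp_neg_div_atTop {τ : ℝ} (hτ : 0 < τ) :
    Tendsto (fun t => exp (-t / τ)) atTop (𝓝 0) := by
  simpa only [neg_div, Function.comp_def, id] using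
    tendsto_exp_neg_atTop_nhds_zero.comp (tendsto_id.atTop_div_const hτ)

theorem single_pulse_never_equilibrates_general
    (ε μ₀ τ : ℝ) (hε : ε ∈ Set.Ioo (0 : ℝ) 1) (hτ : 0 < τ)
    (μ CE CRE : ℝ → ℝ) (hμ : ∀ t : ℝ, μ t = μ₀ * Real.exp (-t / τ))
    (hCE : ∀ t ∈ Set.Ici (0 : ℝ),
      HasDerivAt CE (-((1 - ε) / ε) * μ t * (CE t - CRE t)) t)
    (hCRE : ∀ t ∈ Set.Ici (0 : ℝ),
      HasDerivAt CRE (μ t * (CE t - CRE t)) t)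
    (h0 : CRE 0 < CE 0) :
    (∀ t ∈ Set.Ici (0 : ℝ),
      CE t - CRE t =
        (CE 0 - CRE 0) * Real.exp (-(μ₀ * τ / ε) * (1 - Real.exp (-t / τ)))) ∧
    Filter.Tendsto (fun t => CE t - CRE t) Filter.atTop
      (nhds ((CE 0 - CRE 0) * Real.exp (-(μ₀ * τ / ε)))) ∧
    0 < (CE 0 - CRE 0) * Real.exp (-(μ₀ * τ / ε)) := by
  have hε0 : ε ≠ 0 := hε.1.ne'
  have hdiff : ∀ t ∈ Ici (0 : ℝ),
      HasDerivAt (fun s => CE s - CRE s) (-(μ t / ε) * (CE t - CRE t)) t := fun t ht =>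
    ((hCE t ht).sub (hCRE t ht)).congr_deriv (by field_simp; ring)
  have hexposure : ∀ t ∈ Ici (0 : ℝ),
      HasDerivAt (fun s => μ₀ * τ / ε * (1 - exp (-s / τ))) (μ t / ε) t := fun t _ =>
    ((hasDerivAt_one_sub_exp_neg_div τ t).const_mul _).congr_deriv
      (by rw [hμ]; field_simp)
  have hformula : ∀ t ∈ Ici (0 : ℝ), CE t - CRE t =
      (CE 0 - CRE 0) * exp (-(μ₀ * τ / ε) * (1 - exp (-t / τ))) := fun t ht => by
    simpa [neg_mul] using eq_mul_exp_neg_sub_of_hasDerivAt hdiff hexposure t ht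
  refine ⟨hformula, ?_, mul_pos (sub_pos.mpr h0) (exp_pos _)⟩
  have hlim := (((tendsto_exp_neg_div_atTop hτ).const_sub 1).const_mul
    (-(μ₀ * τ / ε))).rexp.const_mul (CE 0 - CRE 0)
  rw [sub_zero, mul_one] at hlim
  exact hlim.congr' (eventually_ge_atTop 0 |>.mono fun t ht => (hformula t ht).symm)

/-- After a single electroporation pulse with resealing MTC
μ(t) = μ₀·e^{−t/τ}, the concentration difference satisfies
C_E(t) − C_RE(t) = (C_E(0) − C_RE(0))·exp(−(μ₀τ/ε)·(1 − e^{−t/τ})) and tends,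
as t → ∞, to the strictly positive limit (C_E(0) − C_RE(0))·exp(−μ₀τ/ε):
the two compartments never fully equilibrate. -/
theorem single_pulse_never_equilibrates
    (ε μ₀ τ : ℝ) (hε : ε ∈ Set.Ioo (0 : ℝ) 1) (hμ₀ : 0 < μ₀) (hτ : 0 < τ)
    (μ CE CRE : ℝ → ℝ) (hμ : ∀ t : ℝ, μ t = μ₀ * Real.exp (-t / τ))
    (hCE : ∀ t ∈ Set.Ici (0 : ℝ),
      HasDerivAt CE (-((1 - ε) / ε) * μ t * (CE t - CRE t)) t)
    (hCRE : ∀ t ∈ Set.Ici (0 : ℝ),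
      HasDerivAt CRE (μ t * (CE t - CRE t)) t)
    (h0 : CRE 0 < CE 0) :
    (∀ t ∈ Set.Ici (0 : ℝ),
      CE t - CRE t =
        (CE 0 - CRE 0) * Real.exp (-(μ₀ * τ / ε) * (1 - Real.exp (-t / τ)))) ∧
    Filter.Tendsto (fun t => CE t - CRE t) Filter.atTop
      (nhds ((CE 0 - CRE 0) * Real.exp (-(μ₀ * τ / ε)))) ∧
    0 < (CE 0 - CRE 0) * Real.exp (-(μ₀ * τ / ε)) :=
  single_pulse_never_equilibrates_general ε μ₀ τ hε hτ μ CE CRE hμ hCE hCRE h0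
end

section
/- Let μ₀ > 0, τ > 0 and C₀ ∈ ℝ, and let C_RE : [0, ∞) → ℝ be differentiable with C_RE′(t) = μ₀·e^{−t/τ}·(C₀ − C_RE(t)) and C_RE(0) = 0. Then for every t ≥ 0, C_RE(t) = C₀·(1 − exp(−μ₀τ·(1 − e^{−t/τ}))), and as t → ∞ the cellular drug uptake tends to C₀·(1 − e^{−μ₀τ}), which is strictly less than C₀ whenever C₀ > 0. -/
/-!
Multiplying by the integrating factor `exp (∫₀ᵗ μ)` turns the equation into
`((C₀ - C_RE) · exp (∫₀ᵗ μ))' = 0`, so `C₀ - C_RE(t) = C₀ · exp (-∫₀ᵗ μ)`. During resealing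
`∫₀ᵗ μ = μ₀ τ (1 - e^{-t/τ})` only increases to the finite total `μ₀ τ`, so the uptake saturates
strictly below `C₀`.
-/

open Real Set Filter Topology

theorem eq_sub_mul_exp_of_hasDerivAt_mul_sub {a A f : ℝ → ℝ} {c s : ℝ}
    (hA : ∀ t ∈ Ici s, HasDerivAt A (a t) t)
    (hf : ∀ t ∈ Ici s, HasDerivAt f (a t * (c - f t)) t) {t : ℝ} (ht : s ≤ t) :
    f t = c - (c - f s) * exp (A s - A t) := by
  set g : ℝ → ℝ := fun x => (c - f x) * exp (A x)
  have hg : ∀ x ∈ Ici s, HasDerivAt g 0 x := fun x hx =>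
    (((hasDerivAt_const x c).sub (hf x hx)).mul (hA x hx).exp).congr_deriv
      (by simp only [Pi.sub_apply]; ring)
  have hgt : g t = g s :=
    constant_of_has_deriv_right_zero (fun x hx => (hg x hx.1).continuousAt.continuousWithinAt)
      (fun x hx => (hg x hx.1).hasDerivWithinAt) t ⟨ht, le_rfl⟩
  simp only [g] at hgt
  rw [exp_sub]
  field_simp
  linear_combination -hgt

/-- `∫₀ᵗ μ(u) du` for the resealing coefficient `μ(u) = μ₀ e^{-u/τ}`. -/
noncomputable def resealingExposure (μ₀ τ t : ℝ) : ℝ :=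
  μ₀ * τ * (1 - exp (-t / τ))

theorem hasDerivAt_resealingExposure (μ₀ : ℝ) {τ : ℝ} (hτ : τ ≠ 0) (t : ℝ) :
    HasDerivAt (resealingExposure μ₀ τ) (μ₀ * exp (-t / τ)) t := by
  have hexp : HasDerivAt (fun u => exp (-u / τ)) (exp (-t / τ) * (-1 / τ)) t :=
    ((hasDerivAt_id t).neg.div_const τ).exp
  exact (((hasDerivAt_const t 1).sub hexp).const_mul (μ₀ * τ)).congr_deriv (by field_simp; ring)

theorem constant_source_uptake_formula_general
    (μ₀ τ C₀ : ℝ) (hτ : 0 < τ)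
    (CRE : ℝ → ℝ)
    (hCRE : ∀ t ∈ Set.Ici (0 : ℝ),
      HasDerivAt CRE (μ₀ * Real.exp (-t / τ) * (C₀ - CRE t)) t)
    (h0 : CRE 0 = 0) :
    (∀ t ∈ Set.Ici (0 : ℝ),
      CRE t = C₀ * (1 - Real.exp (-(μ₀ * τ) * (1 - Real.exp (-t / τ))))) ∧
    Filter.Tendsto CRE Filter.atTop (nhds (C₀ * (1 - Real.exp (-(μ₀ * τ))))) ∧
    (0 < C₀ → C₀ * (1 - Real.exp (-(μ₀ * τ))) < C₀) := by
  have formula : ∀ t ∈ Ici (0 : ℝ),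
      CRE t = C₀ * (1 - exp (-(μ₀ * τ) * (1 - exp (-t / τ)))) := fun t ht => by
    rw [eq_sub_mul_exp_of_hasDerivAt_mul_sub
      (fun x _ => hasDerivAt_resealingExposure μ₀ hτ.ne' x) hCRE ht, h0]
    simp only [resealingExposure, neg_zero, zero_div, exp_zero]
    ring_nf
  have limit : Tendsto (fun t => C₀ * (1 - exp (-(μ₀ * τ) * (1 - exp (-t / τ))))) atTop
      (𝓝 (C₀ * (1 - exp (-(μ₀ * τ) * (1 - 0))))) :=
    (((continuous_exp.tendsto _).comp ((tendsto_const_nhds.sub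
      (tendsto_exp_neg_div_atTop hτ)).const_mul _)).const_sub 1).const_mul C₀
  rw [sub_zero, mul_one] at limit
  refine ⟨formula, limit.congr' ?_, fun hC₀ => ?_⟩
  · filter_upwards [eventually_ge_atTop 0] with t ht
    exact (formula t ht).symm
  · linarith [mul_pos hC₀ (exp_pos (-(μ₀ * τ)))]

/-- With a constant extracellular concentration C₀ and resealing
MTC μ₀·e^{−t/τ}, the intracellular uptake obeys
C_RE(t) = C₀·(1 − exp(−μ₀τ·(1 − e^{−t/τ}))), tends to C₀·(1 − e^{−μ₀τ}) as
t → ∞, and this limit is strictly less than C₀ whenever C₀ > 0. -/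
theorem constant_source_uptake_formula
    (μ₀ τ C₀ : ℝ) (hμ₀ : 0 < μ₀) (hτ : 0 < τ)
    (CRE : ℝ → ℝ)
    (hCRE : ∀ t ∈ Set.Ici (0 : ℝ),
      HasDerivAt CRE (μ₀ * Real.exp (-t / τ) * (C₀ - CRE t)) t)
    (h0 : CRE 0 = 0) :
    (∀ t ∈ Set.Ici (0 : ℝ),
      CRE t = C₀ * (1 - Real.exp (-(μ₀ * τ) * (1 - Real.exp (-t / τ))))) ∧
    Filter.Tendsto CRE Filter.atTop (nhds (C₀ * (1 - Real.exp (-(μ₀ * τ))))) ∧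
    (0 < C₀ → C₀ * (1 - Real.exp (-(μ₀ * τ))) < C₀) :=
  constant_source_uptake_formula_general μ₀ τ C₀ hτ CRE hCRE h0
end

section
/- Let ε ∈ (0, 1), μ₀ > 0, τ > 0, T > 0 and n ∈ ℕ, and define the pulse-train mass transfer coefficient μ : [0, ∞) → ℝ by μ(t) = μ₀·e^{−(t − kT)/τ} for t ∈ [kT, (k+1)T), k = 0, 1, …, n−1, and μ(t) = 0 for t ≥ nT. If C_E, C_RE : [0, ∞) → ℝ satisfy C_E′(t) = −((1−ε)/ε)·μ(t)·(C_E(t) − C_RE(t)) and C_RE′(t) = μ(t)·(C_E(t) − C_RE(t)) (in the sense that C_E − C_RE is absolutely continuous with derivative −(1/ε)·μ(t)·(C_E − C_RE) almost everywhere), then for every t ≥ nT, C_E(t) − C_RE(t) = (C_E(0) − C_RE(0))·exp(−(n·μ₀τ/ε)·(1 − e^{−T/τ})). In particular, for fixed pulse parameters the residual concentration difference tends to 0 as the number of pulses n tends to infinity. -/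
/-!
Write `D = C_E − C_RE` and `f = −μ/ε`. Since `f` is locally integrable and right-continuous,
the integrating factor `exp (−∫₀ᵗ f)` makes `D · exp (−∫₀ᵗ f)` have zero right derivative, so
`D t = D 0 · exp (∫₀ᵗ f)`. Each of the `n` pulses contributes `μ₀ τ (1 − e^{−T/τ})` to `∫ μ`, and
nothing is added after `nT`.

The integral equation says nothing where `f · D` is not integrable (the interval integral is
then `0`, so it only gives `D = D 0`). Where it is integrable `D` is the explicit solution, so in
any case `D` is bounded and measurable on `[0, t]`, and `f · D` is integrable on every `[0, t]`.
-/

open MeasureTheory Set intervalIntegral Filter Topology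

section LinearIntegralEquation

theorem hasDerivWithinAt_Ici_integral_of_mem_Ico {E : Type*} [NormedAddCommGroup E]
    [NormedSpace ℝ E] [CompleteSpace E] {g : ℝ → E} {a c x : ℝ}
    (hint : IntervalIntegrable g volume a c) (hx : x ∈ Ico a c)
    (hg : ContinuousWithinAt g (Ici x) x) :
    HasDerivWithinAt (fun u => ∫ s in a..u, g s) (g x) (Ici x) x := by
  have hac : a ≤ c := hx.1.trans hx.2.le
  refine integral_hasDerivWithinAt_right
    (hint.mono_set (uIcc_subset_uIcc_left (by rw [uIcc_of_le hac]; exact Ico_subset_Icc_self hx)))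
    ⟨Ioc x c, Ioc_mem_nhdsGT hx.2, ?_⟩ (hg.mono Ioi_subset_Ici_self)
  exact (hint.1.mono_set (Ioc_subset_Ioc_left hx.1)).aestronglyMeasurable

variable {f D : ℝ → ℝ}

theorem eq_mul_exp_integral_of_intervalIntegrable {c : ℝ} (hc : 0 ≤ c)
    (hfi : IntervalIntegrable f volume 0 c)
    (hfr : ∀ x ∈ Ico 0 c, ContinuousWithinAt f (Ici x) x)
    (hD : ∀ t, 0 ≤ t → D t = D 0 + ∫ s in 0..t, f s * D s)
    (hint : IntervalIntegrable (fun s => f s * D s) volume 0 c) :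
    D c = D 0 * Real.exp (∫ s in 0..c, f s) := by
  set F : ℝ → ℝ := fun u => ∫ s in 0..u, f s
  have hFc : ContinuousOn F (Icc 0 c) := by
    simpa only [uIcc_of_le hc] using continuousOn_primitive_interval' hfi left_mem_uIcc
  have hDc : ContinuousOn D (Icc 0 c) := by
    refine (continuousOn_const.add ?_).congr fun t ht => hD t ht.1
    simpa only [uIcc_of_le hc] using continuousOn_primitive_interval' hint left_mem_uIcc
  have hDd : ∀ x ∈ Ico 0 c, HasDerivWithinAt D (f x * D x) (Ici x) x := fun x hx => by
    have hDr : ContinuousWithinAt D (Ici x) x :=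
      (hDc x (Ico_subset_Icc_self hx)).mono_of_mem_nhdsWithin
        (mem_of_superset (Ico_mem_nhdsGE hx.2) (Ico_subset_Icc_self.trans
          (Icc_subset_Icc_left hx.1)))
    have := ((hasDerivWithinAt_Ici_integral_of_mem_Ico hint hx
      ((hfr x hx).mul hDr)).const_add (D 0))
    exact this.congr (fun t ht => hD t (hx.1.trans ht)) (hD x hx.1)
  have hFd : ∀ x ∈ Ico 0 c, HasDerivWithinAt F (f x) (Ici x) x := fun x hx =>
    hasDerivWithinAt_Ici_integral_of_mem_Ico hfi hx (hfr x hx)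
  have hconst := constant_of_has_deriv_right_zero (f := fun t => D t * Real.exp (-F t))
    (hDc.mul hFc.neg.rexp)
    (fun x hx => ((hDd x hx).mul (hFd x hx).neg.exp).congr_deriv (by ring)) c ⟨hc, le_rfl⟩
  simp only [F, integral_same, neg_zero, Real.exp_zero, mul_one] at hconst
  rw [← hconst, mul_assoc, ← Real.exp_add, neg_add_cancel, Real.exp_zero, mul_one]

theorem eq_mul_exp_integral_of_eq_add_integral
    (hfi : ∀ t, 0 ≤ t → IntervalIntegrable f volume 0 t)
    (hfr : ∀ t, 0 ≤ t → ContinuousWithinAt f (Ici t) t)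
    (hD : ∀ t, 0 ≤ t → D t = D 0 + ∫ s in 0..t, f s * D s) {t : ℝ} (ht : 0 ≤ t) :
    D t = D 0 * Real.exp (∫ s in 0..t, f s) := by
  classical
  set S : Set ℝ := Ici 0 ∩ {c | IntervalIntegrable (fun s => f s * D s) volume 0 c}
  set E : ℝ → ℝ := fun u => D 0 * Real.exp (∫ s in 0..u, f s)
  have hSE : ∀ c ∈ S, D c = E c := fun c hc =>
    eq_mul_exp_integral_of_intervalIntegrable hc.1 (hfi c hc.1)
      (fun x hx => hfr x hx.1) hD hc.2
  have hS_meas : MeasurableSet S := by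
    refine OrdConnected.measurableSet ⟨fun x hx y hy z hz => ⟨hx.1.trans hz.1, ?_⟩⟩
    exact hy.2.mono_set (uIcc_subset_uIcc_left (by
      rw [uIcc_of_le hy.1]; exact ⟨hx.1.trans hz.1, hz.2⟩))
  have hD_piecewise : EqOn D (S.piecewise E fun _ => D 0) (Icc 0 t) := fun c hc => by
    by_cases hcS : c ∈ S
    · rw [piecewise_eq_of_mem _ _ _ hcS, hSE c hcS]
    · rw [piecewise_eq_of_notMem _ _ _ hcS, hD c hc.1, integral_undef fun h => hcS ⟨hc.1, h⟩,
        add_zero]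
  have hEc : ContinuousOn E (Icc 0 t) := by
    refine continuousOn_const.mul (ContinuousOn.rexp ?_)
    simpa only [uIcc_of_le ht] using continuousOn_primitive_interval' (hfi t ht) left_mem_uIcc
  obtain ⟨M, hM⟩ := isCompact_Icc.exists_bound_of_continuousOn hEc
  have hD_meas : AEStronglyMeasurable D (volume.restrict (Icc 0 t)) := by
    refine (AEStronglyMeasurable.piecewise hS_meas ?_ aestronglyMeasurable_const).congr
      (EventuallyEq.symm (ae_restrict_of_forall_mem measurableSet_Icc hD_piecewise))
    exact (hEc.aestronglyMeasurable measurableSet_Icc).mono_measure Measure.restrict_le_self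
  have hD_bound : ∀ᵐ c ∂volume.restrict (Icc 0 t), ‖D c‖ ≤ max M ‖D 0‖ := by
    refine ae_restrict_of_forall_mem measurableSet_Icc fun c hc => ?_
    by_cases hcS : c ∈ S
    · exact (hSE c hcS ▸ hM c hc).trans (le_max_left _ _)
    · rw [hD_piecewise hc, piecewise_eq_of_notMem _ _ _ hcS]; exact le_max_right _ _
  have hint : IntervalIntegrable (fun s => f s * D s) volume 0 t := by
    have hf := hfi t ht
    rw [intervalIntegrable_iff_integrableOn_Icc_of_le ht] at hf ⊢
    exact hf.mul_bdd hD_meas hD_bound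
  exact hSE t ⟨ht, hint⟩

end LinearIntegralEquation

theorem exists_nat_lt_mem_Ico_mul {T t : ℝ} {n : ℕ} (hT : 0 < T) (ht : 0 ≤ t)
    (htn : t < n * T) : ∃ k < n, t ∈ Ico (k * T) ((k + 1) * T) := by
  have hq : 0 ≤ t / T := div_nonneg ht hT.le
  refine ⟨⌊t / T⌋₊, ?_, ?_, ?_⟩
  · exact Nat.floor_lt hq |>.2 ((div_lt_iff₀ hT).2 htn)
  · exact (le_div_iff₀ hT).1 (Nat.floor_le hq)
  · exact (div_lt_iff₀ hT).1 (Nat.lt_floor_add_one _)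

structure IsPulseTrain (μ g : ℝ → ℝ) (T : ℝ) (n : ℕ) : Prop where
  eq_pulse : ∀ k : ℕ, k < n → ∀ t, (k : ℝ) * T ≤ t → t < ((k : ℝ) + 1) * T → μ t = g (t - k * T)
  eq_zero : ∀ t, (n : ℝ) * T ≤ t → μ t = 0

namespace IsPulseTrain

variable {μ g : ℝ → ℝ} {T : ℝ} {n : ℕ}

theorem continuousWithinAt_Ici (hμ : IsPulseTrain μ g T n) (hT : 0 < T) (hg : Continuous g)
    {t : ℝ} (ht : 0 ≤ t) : ContinuousWithinAt μ (Ici t) t := by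
  rcases lt_or_ge t (n * T) with htn | htn
  · obtain ⟨k, hk, hkt, htk⟩ := exists_nat_lt_mem_Ico_mul hT ht htn
    refine ((hg.comp (continuous_sub_right _)).continuousWithinAt).congr_of_eventuallyEq ?_
      (hμ.eq_pulse k hk t hkt htk)
    filter_upwards [Ico_mem_nhdsGE htk, self_mem_nhdsWithin] with s hs hts
    exact hμ.eq_pulse k hk s (hkt.trans hts) hs.2
  · exact continuousWithinAt_const.congr (fun s hs => hμ.eq_zero s (htn.trans hs))
      (hμ.eq_zero t htn)

theorem eqOn_Ioo (hμ : IsPulseTrain μ g T n) {k : ℕ} (hk : k < n) :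
    EqOn μ (fun t => g (t - k * T)) (Ioo (k * T) ((k + 1 : ℕ) * T)) := fun t ht =>
  hμ.eq_pulse k hk t ht.1.le (by exact_mod_cast ht.2)

theorem intervalIntegrable_pulse (hμ : IsPulseTrain μ g T n) (hT : 0 < T) (hg : Continuous g)
    {k : ℕ} (hk : k < n) : IntervalIntegrable μ volume (k * T) ((k + 1 : ℕ) * T) := by
  have hle : (k : ℝ) * T ≤ (k + 1 : ℕ) * T := by gcongr; simp
  exact (intervalIntegrable_congr_uIoo (uIoo_of_le hle ▸ hμ.eqOn_Ioo hk)).2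
    ((hg.comp (continuous_sub_right _)).intervalIntegrable _ _)

theorem intervalIntegrable_tail (hμ : IsPulseTrain μ g T n) {t : ℝ} (ht : n * T ≤ t) :
    IntervalIntegrable μ volume (n * T) t :=
  (intervalIntegrable_congr (g := 0) fun s hs =>
    hμ.eq_zero s (by rw [uIoc_of_le ht] at hs; exact hs.1.le)).2 intervalIntegrable_const

theorem integral_tail (hμ : IsPulseTrain μ g T n) {t : ℝ} (ht : n * T ≤ t) :
    ∫ s in (n * T)..t, μ s = 0 := by
  rw [integral_congr (g := 0) fun s hs => hμ.eq_zero s (by rw [uIcc_of_le ht] at hs; exact hs.1),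
    Pi.zero_def, intervalIntegral.integral_zero]

theorem integral_pulse (hμ : IsPulseTrain μ g T n) (hT : 0 < T) {k : ℕ} (hk : k < n) :
    ∫ t in (k * T)..((k + 1 : ℕ) * T), μ t = ∫ s in 0..T, g s := by
  have hle : (k : ℝ) * T ≤ (k + 1 : ℕ) * T := by gcongr; simp
  rw [integral_congr_Ioo_of_le hle (hμ.eqOn_Ioo hk), integral_comp_sub_right]
  congr 1 <;> push_cast <;> ring

theorem intervalIntegrable_pulses (hμ : IsPulseTrain μ g T n) (hT : 0 < T)
    (hg : Continuous g) : IntervalIntegrable μ volume 0 (n * T) := by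
  simpa using IntervalIntegrable.trans_iterate (a := fun k : ℕ => k * T)
    fun k hk => hμ.intervalIntegrable_pulse hT hg hk

theorem integral_pulses (hμ : IsPulseTrain μ g T n) (hT : 0 < T) (hg : Continuous g) :
    ∫ s in 0..(n * T), μ s = n * ∫ s in 0..T, g s := by
  have hsum := sum_integral_adjacent_intervals (a := fun k : ℕ => k * T)
    fun k hk => hμ.intervalIntegrable_pulse hT hg hk
  simp only [Nat.cast_zero, zero_mul] at hsum
  rw [← hsum, Finset.sum_congr rfl fun k hk => hμ.integral_pulse hT (Finset.mem_range.1 hk)]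
  simp

theorem intervalIntegrable (hμ : IsPulseTrain μ g T n) (hT : 0 < T) (hg : Continuous g)
    {t : ℝ} (ht : 0 ≤ t) : IntervalIntegrable μ volume 0 t := by
  rcases le_total t (n * T) with htn | htn
  · exact (hμ.intervalIntegrable_pulses hT hg).mono_set
      (uIcc_subset_uIcc_left (by rw [uIcc_of_le (by positivity)]; exact ⟨ht, htn⟩))
  · exact (hμ.intervalIntegrable_pulses hT hg).trans (hμ.intervalIntegrable_tail htn)

theorem integral_eq_of_le (hμ : IsPulseTrain μ g T n) (hT : 0 < T) (hg : Continuous g) {t : ℝ}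
    (ht : n * T ≤ t) : ∫ s in 0..t, μ s = n * ∫ s in 0..T, g s := by
  rw [← integral_add_adjacent_intervals (hμ.intervalIntegrable_pulses hT hg)
    (hμ.intervalIntegrable_tail ht), hμ.integral_tail ht, add_zero,
    hμ.integral_pulses hT hg]

end IsPulseTrain

theorem integral_exp_neg_div (μ₀ : ℝ) {τ : ℝ} (hτ : τ ≠ 0) (T : ℝ) :
    ∫ s in 0..T, μ₀ * Real.exp (-s / τ) = μ₀ * τ * (1 - Real.exp (-T / τ)) := by
  have h := integral_comp_mul_right Real.exp (c := -τ⁻¹) (a := 0) (b := T) (by simpa using hτ)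
  simp only [integral_exp, zero_mul, Real.exp_zero, smul_eq_mul] at h
  rw [intervalIntegral.integral_const_mul]
  simp only [div_eq_mul_inv, neg_mul, mul_neg] at h ⊢
  rw [h]
  field_simp
  ring

/-- For a train of n identical pulses at times 0, T, …, (n−1)T
with MTC μ(t) = μ₀·e^{−(t−kT)/τ} on [kT,(k+1)T) (k < n) and μ(t) = 0 for
t ≥ nT, the concentration difference (satisfying the ODE
(C_E − C_RE)′ = −(1/ε)·μ·(C_E − C_RE) in the absolutely continuous /
integral-equation sense) equals, for every t ≥ nT,
(C_E(0) − C_RE(0))·exp(−(n·μ₀τ/ε)·(1 − e^{−T/τ})); in particular the residual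
difference tends to 0 as the number of pulses tends to infinity. -/
theorem pulse_train_residual_difference
    (ε μ₀ τ T : ℝ) (n : ℕ) (hε : ε ∈ Set.Ioo (0 : ℝ) 1)
    (hμ₀ : 0 < μ₀) (hτ : 0 < τ) (hT : 0 < T)
    (μ CE CRE : ℝ → ℝ)
    (hμ_pulse : ∀ k : ℕ, k < n → ∀ t : ℝ,
      (k : ℝ) * T ≤ t → t < ((k : ℝ) + 1) * T →
        μ t = μ₀ * Real.exp (-(t - (k : ℝ) * T) / τ))
    (hμ_off : ∀ t : ℝ, (n : ℝ) * T ≤ t → μ t = 0)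
    -- the difference C_E − C_RE is absolutely continuous with derivative
    -- −(1/ε)·μ(t)·(C_E − C_RE) almost everywhere, expressed in the
    -- equivalent integral-equation form:
    (hdiff : ∀ t ∈ Set.Ici (0 : ℝ),
      CE t - CRE t =
        (CE 0 - CRE 0) +
          ∫ s in (0 : ℝ)..t, -(1 / ε) * μ s * (CE s - CRE s)) :
    (∀ t : ℝ, (n : ℝ) * T ≤ t →
      CE t - CRE t =
        (CE 0 - CRE 0) *
          Real.exp (-((n : ℝ) * μ₀ * τ / ε) * (1 - Real.exp (-T / τ)))) ∧
    Filter.Tendsto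
      (fun m : ℕ =>
        (CE 0 - CRE 0) *
          Real.exp (-((m : ℝ) * μ₀ * τ / ε) * (1 - Real.exp (-T / τ))))
      Filter.atTop (nhds 0) := by
  have hμ : IsPulseTrain μ (fun s => μ₀ * Real.exp (-s / τ)) T n := ⟨hμ_pulse, hμ_off⟩
  have hg : Continuous fun s => μ₀ * Real.exp (-s / τ) := by fun_prop
  refine ⟨fun t ht => ?_, ?_⟩
  · rw [eq_mul_exp_integral_of_eq_add_integral (f := fun s => -(1 / ε) * μ s)
      (fun t ht => (hμ.intervalIntegrable hT hg ht).const_mul _)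
      (fun t ht => continuousWithinAt_const.mul (hμ.continuousWithinAt_Ici hT hg ht))
      hdiff ((by positivity : (0 : ℝ) ≤ n * T).trans ht),
      intervalIntegral.integral_const_mul, hμ.integral_eq_of_le hT hg ht,
      integral_exp_neg_div μ₀ hτ.ne']
    congr 2
    ring
  · have hrate : 0 < μ₀ * τ / ε * (1 - Real.exp (-T / τ)) := by
      have : Real.exp (-T / τ) < 1 := Real.exp_lt_one_iff.2 (by simp [neg_div, hT, hτ])
      exact mul_pos (div_pos (mul_pos hμ₀ hτ) hε.1) (sub_pos.2 this)
    have hexponent : Tendsto (fun m : ℕ => -((m : ℝ) * μ₀ * τ / ε) * (1 - Real.exp (-T / τ)))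
        atTop atBot :=
      (tendsto_natCast_atTop_atTop.atTop_mul_const_of_neg (neg_neg_of_pos hrate)).congr
        fun m => by ring
    simpa using (Real.tendsto_exp_atBot.comp hexponent).const_mul (CE 0 - CRE 0)
end

section
/- Let D > 0, ε ∈ (0,1), μ ≥ 0, Δt > 0, Δx > 0, Δy > 0 satisfy the stability conditions Δt·[2D(1/Δx² + 1/Δy²) + ((1−ε)/ε)·μ] ≤ 1 and μ·Δt ≤ 1. Let u, v : ℤ × ℤ → ℝ be bounded grid functions (the extracellular and intracellular concentrations at time level n), and define the updated grids by u′(i,j) = a·u(i+1,j) + a·u(i−1,j) + b·u(i,j) + c·u(i,j+1) + c·u(i,j−1) + d·v(i,j) and v′(i,j) = v(i,j) + μΔt·(u(i,j) − v(i,j)), where a = DΔt/Δx², c = DΔt/Δy², b = 1 − [2D(1/Δx² + 1/Δy²) + ((1−ε)/ε)μ]Δt and d = ((1−ε)/ε)μΔt. Then for all (i,j): inf over all grid points of min(u, v) ≤ u′(i,j) ≤ sup over all grid points of max(u, v), and the same bounds hold for v′(i,j). In particular, if u and v are nonnegative then u′ and v′ are nonnegative, so the coupled FTCS scheme satisfies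 a discrete maximum principle under the stability condition. -/
/-- Under the stability conditions
Δt·[2D(1/Δx² + 1/Δy²) + ((1−ε)/ε)μ] ≤ 1 and μΔt ≤ 1, the coupled FTCS update
of bounded grid functions u (extracellular) and v (intracellular) satisfies a
discrete maximum principle: every updated value u′(i,j), v′(i,j) lies between
the infimum of min(u,v) and the supremum of max(u,v) over all grid points;
in particular nonnegativity is preserved. -/
theorem ftcs_discrete_maximum_principle
    (D ε μ Δt Δx Δy a b c d : ℝ)
    (hD : 0 < D) (hε : ε ∈ Set.Ioo (0 : ℝ) 1) (hμ : 0 ≤ μ)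
    (hΔt : 0 < Δt) (hΔx : 0 < Δx) (hΔy : 0 < Δy)
    (hstab : Δt * (2 * D * (1 / Δx ^ 2 + 1 / Δy ^ 2) + (1 - ε) / ε * μ) ≤ 1)
    (hstab' : μ * Δt ≤ 1)
    (ha : a = D * Δt / Δx ^ 2)
    (hc : c = D * Δt / Δy ^ 2)
    (hb : b = 1 - (2 * D * (1 / Δx ^ 2 + 1 / Δy ^ 2) + (1 - ε) / ε * μ) * Δt)
    (hd : d = (1 - ε) / ε * μ * Δt)
    (u v u' v' : ℤ × ℤ → ℝ)
    (hbdd : ∃ M : ℝ, ∀ p : ℤ × ℤ, |u p| ≤ M ∧ |v p| ≤ M)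
    (hu' : ∀ i j : ℤ, u' (i, j) =
      a * u (i + 1, j) + a * u (i - 1, j) + b * u (i, j) +
        c * u (i, j + 1) + c * u (i, j - 1) + d * v (i, j))
    (hv' : ∀ i j : ℤ, v' (i, j) =
      v (i, j) + μ * Δt * (u (i, j) - v (i, j))) :
    (∀ p : ℤ × ℤ,
      (⨅ q : ℤ × ℤ, min (u q) (v q)) ≤ u' p ∧
      u' p ≤ ⨆ q : ℤ × ℤ, max (u q) (v q) ∧
      (⨅ q : ℤ × ℤ, min (u q) (v q)) ≤ v' p ∧
      v' p ≤ ⨆ q : ℤ × ℤ, max (u q) (v q)) ∧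
    ((∀ p : ℤ × ℤ, 0 ≤ u p) → (∀ p : ℤ × ℤ, 0 ≤ v p) →
      ∀ p : ℤ × ℤ, 0 ≤ u' p ∧ 0 ≤ v' p) := by
  obtain ⟨hε0, hε1⟩ := hε
  have hxx : (0:ℝ) < Δx ^ 2 := by positivity
  have hyy : (0:ℝ) < Δy ^ 2 := by positivity
  have ha0 : 0 ≤ a := by rw [ha]; positivity
  have hc0 : 0 ≤ c := by rw [hc]; positivity
  have hk0 : 0 ≤ (1 - ε) / ε * μ := by
    have h : 0 ≤ (1 - ε) / ε := div_nonneg (by linarith) hε0.le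
    exact mul_nonneg h hμ
  have hd0 : 0 ≤ d := by rw [hd]; exact mul_nonneg hk0 hΔt.le
  have hb0 : 0 ≤ b := by rw [hb]; nlinarith [hstab]
  have hsum : a + a + b + c + c + d = 1 := by
    rw [ha, hb, hc, hd]; field_simp; ring
  obtain ⟨M0, hM0⟩ := hbdd
  set m := ⨅ q : ℤ × ℤ, min (u q) (v q) with hm
  set S := ⨆ q : ℤ × ℤ, max (u q) (v q) with hS
  have hbdb : BddBelow (Set.range fun q : ℤ × ℤ => min (u q) (v q)) := by
    refine ⟨-M0, ?_⟩
    rintro x ⟨q, rfl⟩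
    have hq := hM0 q
    have h1 := abs_le.mp hq.1
    have h2 := abs_le.mp hq.2
    exact le_min h1.1 h2.1
  have hbda : BddAbove (Set.range fun q : ℤ × ℤ => max (u q) (v q)) := by
    refine ⟨M0, ?_⟩
    rintro x ⟨q, rfl⟩
    have hq := hM0 q
    have h1 := abs_le.mp hq.1
    have h2 := abs_le.mp hq.2
    exact max_le h1.2 h2.2
  have hlo : ∀ q : ℤ × ℤ, m ≤ u q ∧ m ≤ v q := by
    intro q
    have := ciInf_le hbdb q
    exact ⟨this.trans (min_le_left _ _), this.trans (min_le_right _ _)⟩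
  have hhi : ∀ q : ℤ × ℤ, u q ≤ S ∧ v q ≤ S := by
    intro q
    have := le_ciSup hbda q
    exact ⟨(le_max_left _ _).trans this, (le_max_right _ _).trans this⟩
  have key : ∀ (lo : ℝ), (∀ q : ℤ × ℤ, lo ≤ u q ∧ lo ≤ v q) →
      ∀ p : ℤ × ℤ, lo ≤ u' p ∧ lo ≤ v' p := by
    intro lo hlo p
    obtain ⟨i, j⟩ := p
    constructor
    · rw [hu' i j]
      have h1 := (hlo (i + 1, j)).1
      have h2 := (hlo (i - 1, j)).1
      have h3 := (hlo (i, j)).1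
      have h4 := (hlo (i, j + 1)).1
      have h5 := (hlo (i, j - 1)).1
      have h6 := (hlo (i, j)).2
      have hsl : (a + a + b + c + c + d) * lo = lo := by rw [hsum]; ring
      linarith [mul_le_mul_of_nonneg_left h1 ha0, mul_le_mul_of_nonneg_left h2 ha0,
        mul_le_mul_of_nonneg_left h3 hb0, mul_le_mul_of_nonneg_left h4 hc0,
        mul_le_mul_of_nonneg_left h5 hc0, mul_le_mul_of_nonneg_left h6 hd0, hsl]
    · rw [hv' i j]
      have h3 := (hlo (i, j)).1
      have h6 := (hlo (i, j)).2
      have hmt : 0 ≤ μ * Δt := by positivity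
      have h1mt : (0:ℝ) ≤ 1 - μ * Δt := by linarith
      linarith [mul_le_mul_of_nonneg_left h3 hmt, mul_le_mul_of_nonneg_left h6 h1mt]
  have keyhi : ∀ p : ℤ × ℤ, u' p ≤ S ∧ v' p ≤ S := by
    intro p
    obtain ⟨i, j⟩ := p
    constructor
    · rw [hu' i j]
      have h1 := (hhi (i + 1, j)).1
      have h2 := (hhi (i - 1, j)).1
      have h3 := (hhi (i, j)).1
      have h4 := (hhi (i, j + 1)).1
      have h5 := (hhi (i, j - 1)).1
      have h6 := (hhi (i, j)).2
      have hsl : (a + a + b + c + c + d) * S = S := by rw [hsum]; ring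
      linarith [mul_le_mul_of_nonneg_left h1 ha0, mul_le_mul_of_nonneg_left h2 ha0,
        mul_le_mul_of_nonneg_left h3 hb0, mul_le_mul_of_nonneg_left h4 hc0,
        mul_le_mul_of_nonneg_left h5 hc0, mul_le_mul_of_nonneg_left h6 hd0, hsl]
    · rw [hv' i j]
      have h3 := (hhi (i, j)).1
      have h6 := (hhi (i, j)).2
      have hmt : 0 ≤ μ * Δt := by positivity
      have h1mt : (0:ℝ) ≤ 1 - μ * Δt := by linarith
      linarith [mul_le_mul_of_nonneg_left h3 hmt, mul_le_mul_of_nonneg_left h6 h1mt]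
  constructor
  · intro p
    exact ⟨(key m hlo p).1, (keyhi p).1, (key m hlo p).2, (keyhi p).2⟩
  · intro hu0 hv0 p
    exact key 0 (fun q => ⟨hu0 q, hv0 q⟩) p
end
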